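/- arXiv:2210.13320 — 2 statements merged into one kernel-verified Lean document; each statement's English description precedes it below -/
import Mathlib

section
/- Let G = (V, E) be a finite simple graph, T a spanning tree of G rooted at r, and A ⊆ V with A ≠ ∅ and A ≠ V. Suppose that the set of tree edges crossing the cut satisfies E(T) ∩ δ(A) = {e(v₁), …, e(vₖ)} for k distinct non-root vertices v₁, …, vₖ. Then |δ(A)| = Σ_{l=1}^{k} (−1)^{l−1} · 2^{l−1} · Σ_{S' ⊆ {1,…,k}, |S'| = l} |⋂_{i ∈ S'} δ(vᵢ↓)|. -/
/-- `desc T r v` is the set of descendants of `v` in the tree `T` rooted at `r`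
(vertices `u` such that `v` lies on every path from `r` to `u`), including `v` itself. -/
def desc {V : Type*} (T : SimpleGraph V) (r v : V) : Set V :=
  {u | ∀ p : T.Walk r u, p.IsPath → v ∈ p.support}

/-- `cut G A` is `δ(A)`: the set of edges of `G` with exactly one endpoint in `A`. -/
def cut {V : Type*} (G : SimpleGraph V) (A : Set V) : Set (Sym2 V) :=
  {e | e ∈ G.edgeSet ∧ ∃ x y, e = s(x, y) ∧ x ∈ A ∧ y ∉ A}

open Classical in
/-- `xorFam s A` is the symmetric difference `⊕_{i ∈ s} A i`:
an element belongs to it iff it belongs to an odd number of the sets `A i`. -/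
noncomputable def xorFam {ι α : Type*} (s : Finset ι) (A : ι → Set α) : Set α :=
  {x | Odd (s.filter (fun i => x ∈ A i)).card}
/-!
Along a tree edge `e(x)` the side of `A` changes exactly when `x` is one of the `vᵢ`, and so
does the parity of the number of `i` with `x ∈ vᵢ↓`. Hence `A` or its complement is the set
`X` of vertices lying in an odd number of the `vᵢ↓`, and `δ(A) = δ(X) = ⊕ᵢ δ(vᵢ↓)` because
`δ` is additive over `𝔽₂`. The formula is then the general identity
`|⊕ᵢ Bᵢ| = ∑_{l ≥ 1} (-2)^(l-1) ∑_{|S| = l} |⋂_{i ∈ S} Bᵢ|`, which holds pointwise since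
`∑_{l ≥ 1} (-2)^(l-1) C(m, l) = (1 - (1 - 2)^m) / 2` is `1` for odd `m`, `0` for even `m`.
-/

open SimpleGraph Finset

section XorFam

lemma sum_Icc_neg_one_pow_mul_two_pow_mul_choose {m n : ℕ} (hmn : m ≤ n) :
    ∑ l ∈ Icc 1 n, (-1 : ℤ) ^ (l - 1) * 2 ^ (l - 1) * (m.choose l : ℤ) =
      if Odd m then 1 else 0 := by
  have hbinom : ∑ l ∈ range (n + 1), (-2 : ℤ) ^ l * (m.choose l : ℤ) = (-1) ^ m := by
    rw [← sum_subset (range_subset_range.2 (Nat.succ_le_succ hmn)) fun l _ hl => by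
      rw [Nat.choose_eq_zero_of_lt (by simpa using hl), Nat.cast_zero, mul_zero]]
    simpa [show (-2 : ℤ) + 1 = -1 by norm_num] using (add_pow (-2 : ℤ) 1 m).symm
  have hrange : range (n + 1) = insert 0 (Icc 1 n) := by
    ext l; simp only [mem_range, mem_insert, mem_Icc]; omega
  rw [hrange, sum_insert (by simp), pow_zero, Nat.choose_zero_right, Nat.cast_one, one_mul,
    ← eq_sub_iff_add_eq'] at hbinom
  have hterm : ∀ l ∈ Icc 1 n, -2 * ((-1 : ℤ) ^ (l - 1) * 2 ^ (l - 1) * (m.choose l : ℤ)) =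
      (-2) ^ l * (m.choose l : ℤ) := by
    intro l hl
    obtain ⟨j, rfl⟩ : ∃ j, l = j + 1 := ⟨l - 1, by grind⟩
    rw [Nat.add_sub_cancel, pow_succ, ← mul_pow]
    ring
  apply mul_left_cancel₀ (by norm_num : (-2 : ℤ) ≠ 0)
  rw [mul_sum, sum_congr rfl hterm, hbinom]
  rcases Nat.even_or_odd m with hm | hm
  · rw [hm.neg_one_pow, if_neg (Nat.not_odd_iff_even.2 hm)]; ring
  · rw [hm.neg_one_pow, if_pos hm]; ring

lemma card_filter_powersetCard_mem_iInter {ι α : Type*} [DecidableEq ι] (s : Finset ι)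
    (A : ι → Set α) (x : α) (l : ℕ) [DecidablePred (x ∈ A ·)]
    [DecidablePred fun S : Finset ι => x ∈ ⋂ i ∈ S, A i] :
    #{S ∈ s.powersetCard l | x ∈ ⋂ i ∈ S, A i} = (#{i ∈ s | x ∈ A i}).choose l := by
  rw [← card_powersetCard]
  congr 1
  ext S
  simp only [mem_filter, mem_powersetCard, Set.mem_iInter₂, subset_iff]
  grind

lemma ncard_eq_sum_ite {α : Type*} [Fintype α] (s : Set α) [DecidablePred (· ∈ s)] :
    (s.ncard : ℤ) = ∑ x, if x ∈ s then 1 else 0 := by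
  rw [sum_boole, ← Set.ncard_coe_finset, coe_filter_univ, Set.ofPred_mem_eq]

theorem ncard_xorFam {ι α : Type*} [Finite α] (s : Finset ι) (A : ι → Set α) :
    ((xorFam s A).ncard : ℤ) = ∑ l ∈ Icc 1 #s, (-1 : ℤ) ^ (l - 1) * 2 ^ (l - 1) *
      ∑ S ∈ s.powersetCard l, ((⋂ i ∈ S, A i).ncard : ℤ) := by
  classical
  have := Fintype.ofFinite α
  calc ((xorFam s A).ncard : ℤ)
      = ∑ x, if Odd #{i ∈ s | x ∈ A i} then 1 else 0 := by
        rw [ncard_eq_sum_ite]; exact sum_congr rfl fun x _ => if_congr Iff.rfl rfl rfl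
    _ = ∑ x, ∑ l ∈ Icc 1 #s, (-1 : ℤ) ^ (l - 1) * 2 ^ (l - 1) *
          ∑ S ∈ s.powersetCard l, if x ∈ ⋂ i ∈ S, A i then 1 else 0 := by
      refine sum_congr rfl fun x _ => ?_
      simp_rw [sum_boole, card_filter_powersetCard_mem_iInter]
      exact (sum_Icc_neg_one_pow_mul_two_pow_mul_choose (card_filter_le _ _)).symm
    _ = _ := by
      simp_rw [ncard_eq_sum_ite, mul_sum]
      rw [sum_comm]
      refine sum_congr rfl fun l _ => ?_
      rw [sum_comm]

lemma even_card_filter_not_iff {ι : Type*} (s : Finset ι) (P Q : ι → Prop)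
    [DecidablePred P] [DecidablePred Q] :
    Even #{i ∈ s | ¬(P i ↔ Q i)} ↔ (Even #{i ∈ s | P i} ↔ Even #{i ∈ s | Q i}) := by
  classical
  induction s using Finset.induction with
  | empty => simp
  | insert a s ha ih =>
    simp only [filter_insert]
    by_cases hp : P a <;> by_cases hq : Q a <;>
      simp [hp, hq, card_insert_of_notMem (fun h => ha (mem_of_mem_filter a h)),
        Nat.even_add_one, ih, -Nat.not_even_iff_odd] <;> tauto

end XorFam

section Cut

variable {V : Type*} {G : SimpleGraph V}

lemma mk_mem_cut_iff {A : Set V} {x y : V} :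
    s(x, y) ∈ cut G A ↔ G.Adj x y ∧ ¬(x ∈ A ↔ y ∈ A) := by
  constructor
  · rintro ⟨hxy, a, b, hab, ha, hb⟩
    refine ⟨hxy, ?_⟩
    rcases Sym2.eq_iff.1 hab with ⟨rfl, rfl⟩ | ⟨rfl, rfl⟩ <;> tauto
  · rintro ⟨hxy, hA⟩
    by_cases hx : x ∈ A
    · exact ⟨hxy, x, y, rfl, hx, by tauto⟩
    · exact ⟨hxy, y, x, Sym2.eq_swap, by tauto, hx⟩

lemma cut_compl (A : Set V) : cut G Aᶜ = cut G A := by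
  ext e
  induction e using Sym2.ind with
  | _ x y => simp only [mk_mem_cut_iff, Set.mem_compl_iff, not_iff_not]

lemma xorFam_cut {ι : Type*} (s : Finset ι) (B : ι → Set V) :
    xorFam s (fun i => cut G (B i)) = cut G (xorFam s B) := by
  classical
  ext e
  induction e using Sym2.ind with
  | _ x y =>
    simp only [xorFam, Set.mem_ofPred_eq, mk_mem_cut_iff]
    by_cases hxy : G.Adj x y
    · simp only [hxy, true_and, ← Nat.not_even_iff_odd, even_card_filter_not_iff]
      tauto
    · simp [hxy]

end Cut

section RootedTree

variable {V : Type*} {T : SimpleGraph V} (hT : T.IsTree) (r : V)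

noncomputable def treePath (u : V) : T.Walk r u := (hT.existsUnique_path r u).choose

variable {r}

omit hT in
lemma self_mem_desc (x : V) : x ∈ desc T r x := fun p _ => p.end_mem_support

include hT

lemma isPath_treePath (u : V) : (treePath hT r u).IsPath :=
  (hT.existsUnique_path r u).choose_spec.1

lemma eq_treePath {u : V} {p : T.Walk r u} (hp : p.IsPath) : p = treePath hT r u :=
  (hT.existsUnique_path r u).choose_spec.2 p hp

lemma mem_desc_iff {u w : V} : u ∈ desc T r w ↔ w ∈ (treePath hT r u).support :=
  ⟨fun h => h _ (isPath_treePath hT u), fun h _ hp => eq_treePath hT hp ▸ h⟩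

lemma eq_of_mem_desc_of_mem_desc {u w : V} (huw : u ∈ desc T r w) (hwu : w ∈ desc T r u) :
    u = w := by
  classical
  by_contra hne
  rw [mem_desc_iff hT] at huw hwu
  have hprefix : treePath hT r w = (treePath hT r u).takeUntil w huw :=
    (eq_treePath hT ((isPath_treePath hT u).takeUntil huw)).symm
  exact Walk.endpoint_notMem_support_takeUntil (isPath_treePath hT u) huw hne (hprefix ▸ hwu)

variable {π : V → V} (hπ : ∀ x, x ≠ r → T.Adj x (π x) ∧ x ∈ desc T r (π x))
include hπ

lemma parent_notMem_desc {x : V} (hx : x ≠ r) : π x ∉ desc T r x :=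
  fun h => (hπ x hx).1.ne (eq_of_mem_desc_of_mem_desc hT (hπ x hx).2 h)

lemma treePath_eq_concat {x : V} (hx : x ≠ r) :
    treePath hT r x = (treePath hT r (π x)).concat (hπ x hx).1.symm :=
  (eq_treePath hT ((isPath_treePath hT (π x)).concat
    (mt (mem_desc_iff hT).2 (parent_notMem_desc hT hπ hx)) _)).symm

lemma mem_desc_iff_parent_mem_desc {x w : V} (hx : x ≠ r) (hw : w ≠ x) :
    x ∈ desc T r w ↔ π x ∈ desc T r w := by
  rw [mem_desc_iff hT, mem_desc_iff hT, treePath_eq_concat hT hπ hx, Walk.support_concat]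
  simp [hw]

lemma iff_root_of_forall_iff_parent (P : V → Prop) (hP : ∀ x, x ≠ r → (P x ↔ P (π x)))
    (x : V) : P x ↔ P r := by
  induction hn : (treePath hT r x).length using Nat.strong_induction_on generalizing x with
  | _ n ih =>
    by_cases hx : x = r
    · rw [hx]
    · refine (hP x hx).trans (ih _ ?_ (π x) rfl)
      rw [← hn, treePath_eq_concat hT hπ hx, Walk.length_concat]
      exact Nat.lt_succ_self _

lemma eq_of_mk_parent_eq {x y : V} (hx : x ≠ r) (hy : y ≠ r) (h : s(x, π x) = s(y, π y)) :
    x = y := by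
  rcases Sym2.eq_iff.1 h with ⟨hxy, -⟩ | ⟨hxy, hyx⟩
  · exact hxy
  · exact eq_of_mem_desc_of_mem_desc hT (hyx ▸ (hπ x hx).2) (hxy ▸ (hπ y hy).2)

open Classical in
lemma card_filter_mem_desc {ι : Type*} (s : Finset ι) (v : ι → V) {x : V} (hx : x ≠ r) :
    #{i ∈ s | x ∈ desc T r (v i)} =
      #{i ∈ s | π x ∈ desc T r (v i)} + #{i ∈ s | v i = x} := by
  have hdisj : Disjoint {i ∈ s | π x ∈ desc T r (v i)} {i ∈ s | v i = x} :=
    disjoint_filter.2 fun i _ h hi => parent_notMem_desc hT hπ hx (hi ▸ h)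
  rw [← card_union_of_disjoint hdisj, ← filter_or]
  refine congrArg card (filter_congr fun i _ => ?_)
  by_cases hi : v i = x
  · simp [hi, self_mem_desc]
  · simp [hi, mem_desc_iff_parent_mem_desc hT hπ hx hi]

end RootedTree

section TreeCut

variable {V : Type*} {G T : SimpleGraph V} (hT : T.IsTree) {r : V} {π : V → V}
  (hπ : ∀ x, x ≠ r → T.Adj x (π x) ∧ x ∈ desc T r (π x))
  {ι : Type*} {v : ι → V}
include hT hπ

lemma mem_xorFam_desc_iff_parent [Fintype ι] {x : V} (hv : Function.Injective v)
    (hx : x ≠ r) :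
    (x ∈ xorFam univ (fun i => desc T r (v i)) ↔ π x ∈ xorFam univ (fun i => desc T r (v i)))
      ↔ x ∉ Set.range v := by
  classical
  simp only [xorFam, Set.mem_ofPred_eq]
  rw [card_filter_mem_desc hT hπ _ _ hx]
  by_cases hxv : x ∈ Set.range v
  · obtain ⟨i, rfl⟩ := hxv
    have hone : #{j ∈ univ | v j = v i} = 1 :=
      card_eq_one.2 ⟨i, by ext j; simp [hv.eq_iff]⟩
    simp only [hone, Nat.odd_add_one, Set.mem_range_self, not_true_eq_false]
    tauto
  · have hzero : #{j ∈ univ | v j = x} = 0 :=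
      card_eq_zero.2 (filter_eq_empty_iff.2 fun j _ h => hxv ⟨j, h⟩)
    simp only [hzero, add_zero, hxv, not_false_eq_true]

lemma iff_parent_mem_iff_notMem_range (hTG : T ≤ G) {A : Set V} (hroot : ∀ i, v i ≠ r)
    (hcross : T.edgeSet ∩ cut G A = Set.range (fun i => s(v i, π (v i)))) {x : V}
    (hx : x ≠ r) : (x ∈ A ↔ π x ∈ A) ↔ x ∉ Set.range v := by
  rw [← not_iff_not, not_not]
  calc ¬(x ∈ A ↔ π x ∈ A)
      ↔ s(x, π x) ∈ T.edgeSet ∩ cut G A := by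
        simp [mk_mem_cut_iff, (hπ x hx).1, hTG (hπ x hx).1]
    _ ↔ ∃ i, s(v i, π (v i)) = s(x, π x) := by rw [hcross]; rfl
    _ ↔ x ∈ Set.range v :=
        exists_congr fun i => ⟨eq_of_mk_parent_eq hT hπ (hroot i) hx, fun h => h ▸ rfl⟩

lemma cut_eq_cut_xorFam_desc [Fintype ι] (hTG : T ≤ G) {A : Set V}
    (hv : Function.Injective v) (hroot : ∀ i, v i ≠ r)
    (hcross : T.edgeSet ∩ cut G A = Set.range (fun i => s(v i, π (v i)))) :
    cut G A = cut G (xorFam univ fun i => desc T r (v i)) := by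
  set X := xorFam univ fun i => desc T r (v i)
  have hinv : ∀ x, (x ∈ A ↔ x ∈ X) ↔ (r ∈ A ↔ r ∈ X) :=
    iff_root_of_forall_iff_parent hT hπ _ fun x hx => by
      have hA := iff_parent_mem_iff_notMem_range hT hπ hTG hroot hcross hx
      have hX := mem_xorFam_desc_iff_parent hT hπ hv hx
      tauto
  by_cases hr : r ∈ A ↔ r ∈ X
  · exact congrArg (cut G) (Set.ext fun x => (hinv x).2 hr)
  · rw [← cut_compl X]
    refine congrArg (cut G) (Set.ext fun x => ?_)
    have := hinv x
    simp only [Set.mem_compl_iff]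
    tauto

end TreeCut

theorem stmt0_general {V : Type*} [Fintype V] (G T : SimpleGraph V) (hT : T.IsTree)
    (hTG : T ≤ G) (r : V) (A : Set V)
    (k : ℕ) (v : Fin k → V) (hinj : Function.Injective v) (hroot : ∀ i, v i ≠ r)
    (π : V → V) (hπ : ∀ x, x ≠ r → T.Adj x (π x) ∧ x ∈ desc T r (π x))
    (hcross : T.edgeSet ∩ cut G A = Set.range (fun i => s(v i, π (v i)))) :
    ((cut G A).ncard : ℤ) =
      ∑ l ∈ Finset.Icc 1 k, (-1 : ℤ) ^ (l - 1) * 2 ^ (l - 1) *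
        ∑ S ∈ Finset.univ.filter (fun S : Finset (Fin k) => S.card = l),
          ((⋂ i ∈ S, cut G (desc T r (v i))).ncard : ℤ) := by
  rw [cut_eq_cut_xorFam_desc hT hπ hTG hinj hroot hcross, ← xorFam_cut, ncard_xorFam,
    card_univ, Fintype.card_fin]
  simp only [univ_filter_card_eq]

theorem stmt0 {V : Type*} [Fintype V] (G T : SimpleGraph V) (hT : T.IsTree)
    (hTG : T ≤ G) (r : V) (A : Set V) (hA₁ : A ≠ ∅) (hA₂ : A ≠ Set.univ)
    (k : ℕ) (v : Fin k → V) (hinj : Function.Injective v) (hroot : ∀ i, v i ≠ r)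
    (π : V → V) (hπ : ∀ x, x ≠ r → T.Adj x (π x) ∧ x ∈ desc T r (π x))
    (hcross : T.edgeSet ∩ cut G A = Set.range (fun i => s(v i, π (v i)))) :
    ((cut G A).ncard : ℤ) =
      ∑ l ∈ Finset.Icc 1 k, (-1 : ℤ) ^ (l - 1) * 2 ^ (l - 1) *
        ∑ S ∈ Finset.univ.filter (fun S : Finset (Fin k) => S.card = l),
          ((⋂ i ∈ S, cut G (desc T r (v i))).ncard : ℤ) :=
  stmt0_general G T hT hTG r A k v hinj hroot π hπ hcross
end

section
/- Let G = (V, E) be a finite simple graph, T a spanning tree of G rooted at r, and S = {x₁, x₂, …, xₖ} a set of k ≥ 3 distinct non-root vertices. Assume: (i) there exists x' ∈ S such that every y' ∈ S satisfies y' ∈ x'↓ (all vertices of S are descendants of x'); and (ii) for every x'' ∈ S there exists y'' ∈ S such that y'' is not on the tree path from r to x''. Then δ(x₁↓) ∩ δ(x₂↓) ∩ ⋯ ∩ δ(xₖ↓) = ∅. -/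
/-!
Suppose an edge `s(a, b)` lies in every cut, with `a` in the subtree of the common ancestor `x i`
and `b` outside it. Every subtree `desc T r (x j)` is contained in that of `x i`, so `b` lies
outside all of them and hence `a` inside all of them: every `x j` is on the tree path from `r` to
`a`. The `x j` deepest on this path has all the others as ancestors, which (ii) forbids.
-/

theorem SimpleGraph.Walk.mem_support_takeUntil_iff {V : Type*} [DecidableEq V] {G : SimpleGraph V}
    {u v w y : V} (p : G.Walk u v) (hw : w ∈ p.support) (hy : y ∈ p.support) :
    y ∈ (p.takeUntil w hw).support ↔ p.support.idxOf y ≤ p.support.idxOf w := by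
  rw [takeUntil_eq_take, support_copy, support_take, List.mem_take_iff_idxOf_lt hy, Nat.lt_succ_iff]

theorem mem_desc_trans {V : Type*} {T : SimpleGraph V} {r u v w : V}
    (hwv : w ∈ desc T r v) (huw : u ∈ desc T r w) : u ∈ desc T r v := fun p hp => by
  classical
  exact p.support_takeUntil_subset_support (huw p hp) (hwv _ (hp.takeUntil (huw p hp)))

theorem SimpleGraph.IsAcyclic.mem_desc_of_mem_support {V : Type*} {T : SimpleGraph V}
    (hT : T.IsAcyclic) {r u v : V} {p : T.Walk r u} (hp : p.IsPath) (hv : v ∈ p.support) :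
    u ∈ desc T r v := fun q hq => by
  rwa [show q = p from congrArg Subtype.val ((hT.subsingleton_path r u).elim ⟨q, hq⟩ ⟨p, hp⟩)]

/-- The ancestors of `a` all lie on the tree path from `r` to `a`; the deepest one of the family
works. -/
theorem SimpleGraph.IsTree.exists_forall_mem_desc {V ι : Type*} [Finite ι] [Nonempty ι]
    {T : SimpleGraph V} (hT : T.IsTree) {r a : V} (x : ι → V) (ha : ∀ i, a ∈ desc T r (x i)) :
    ∃ m, ∀ i, x m ∈ desc T r (x i) := by
  classical
  obtain ⟨P, hP, -⟩ := hT.existsUnique_path r a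
  have hmem : ∀ i, x i ∈ P.support := fun i => ha i P hP
  obtain ⟨m, hm⟩ := Finite.exists_max fun i => P.support.idxOf (x i)
  exact ⟨m, fun i => hT.isAcyclic.mem_desc_of_mem_support (hP.takeUntil (hmem m))
    ((P.mem_support_takeUntil_iff (hmem m) (hmem i)).2 (hm i))⟩

theorem mem_of_mem_cut_of_subset {V : Type*} {G : SimpleGraph V} {A B : Set V} {a b : V}
    (hAB : A ⊆ B) (he : s(a, b) ∈ cut G A) (hb : b ∉ B) : a ∈ A := by
  obtain ⟨-, u, v, huv, hu, -⟩ := he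
  rcases Sym2.eq_iff.mp huv with ⟨rfl, -⟩ | ⟨-, rfl⟩
  · exact hu
  · exact absurd (hAB hu) hb

theorem stmt12_general {V : Type*} (G T : SimpleGraph V) (hT : T.IsTree)
    (r : V) (k : ℕ) (x : Fin k → V)
    (h₁ : ∃ i : Fin k, ∀ j : Fin k, x j ∈ desc T r (x i))
    (h₂ : ∀ i : Fin k, ∃ j : Fin k, x i ∉ desc T r (x j)) :
    ⋂ i, cut G (desc T r (x i)) = ∅ := by
  refine Set.eq_empty_of_forall_notMem fun e he => ?_
  rw [Set.mem_iInter] at he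
  obtain ⟨i, hi⟩ := h₁
  obtain ⟨-, a, b, rfl, -, hb⟩ := he i
  have hsub : ∀ j, desc T r (x j) ⊆ desc T r (x i) := fun j _ hu => mem_desc_trans (hi j) hu
  have : Nonempty (Fin k) := ⟨i⟩
  obtain ⟨m, hm⟩ := hT.exists_forall_mem_desc x fun j => mem_of_mem_cut_of_subset (hsub j) (he j) hb
  obtain ⟨j, hj⟩ := h₂ m
  exact hj (hm j)

theorem stmt12 {V : Type*} [Fintype V] (G T : SimpleGraph V) (hT : T.IsTree)
    (hTG : T ≤ G) (r : V) (k : ℕ) (hk : 3 ≤ k) (x : Fin k → V)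
    (hinj : Function.Injective x) (hroot : ∀ i, x i ≠ r)
    (h₁ : ∃ i : Fin k, ∀ j : Fin k, x j ∈ desc T r (x i))
    (h₂ : ∀ i : Fin k, ∃ j : Fin k, x i ∉ desc T r (x j)) :
    ⋂ i, cut G (desc T r (x i)) = ∅ :=
  stmt12_general G T hT r k x h₁ h₂
end
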